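/- Let Q be symmetric positive definite with eigenvalues in [α/2, β/2], c(x,y) = (x-y)ᵀQ(x-y), and let m > 0, λ₁ ∈ (0,1], λ₂, λ₃ ≥ 0. Then for any points x*ₜ, x*ₜ₋₁, xₜ₋₁ ∈ ℝᵈ: λ₁c(x*ₜ,xₜ₋₁) − (λ₁+λ₂+λ₃)c(xₜ₋₁,x*ₜ₋₁) − (m/2)‖x*ₜ₋₁ − xₜ₋₁‖² ≤ λ₁·(1 + λ₁β²/(α((λ₂+λ₃)β + m)))·c(x*ₜ,x*ₜ₋₁). -/

import Mathlib

/-!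
Write `u = x*ₜ - x*ₜ₋₁` and `v = x*ₜ₋₁ - xₜ₋₁`, so that `c(x*ₜ, xₜ₋₁) = c(u) + c(v) + 2 uᵀQv`.
The cross term is absorbed by weighted AM-GM for the semi-inner product `Q`,
`2 λ₁ uᵀQv ≤ (λ₁² / k) c(u) + k c(v)` with `k = α((λ₂ + λ₃)β + m) / β²`, chosen so that
`λ₁² / k` is the coefficient on the right-hand side. The remaining `k c(v)` is paid for by
`(λ₂ + λ₃) c(v) + (m/2)‖v‖²`, since `c(v) ≤ (β/2)‖v‖²` and `α ≤ β`.
-/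

open Matrix Finset

/-- Squared Mahalanobis distance `c(x,y) = (x-y)ᵀQ(x-y)`. -/
noncomputable def mahal {d : ℕ} (Q : Matrix (Fin d) (Fin d) ℝ) (x y : Fin d → ℝ) : ℝ :=
  (x - y) ⬝ᵥ Q *ᵥ (x - y)

namespace Matrix

variable {n R : Type*} [Fintype n]

theorem IsSymm.dotProduct_mulVec_comm [CommSemiring R] {Q : Matrix n n R} (hQ : Q.IsSymm)
    (x y : n → R) : x ⬝ᵥ Q *ᵥ y = y ⬝ᵥ Q *ᵥ x := by
  rw [dotProduct_mulVec, ← mulVec_transpose, hQ.eq, dotProduct_comm]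

theorem IsSymm.add_dotProduct_mulVec_add [CommSemiring R] {Q : Matrix n n R} (hQ : Q.IsSymm)
    (x y : n → R) :
    (x + y) ⬝ᵥ Q *ᵥ (x + y) = x ⬝ᵥ Q *ᵥ x + y ⬝ᵥ Q *ᵥ y + 2 * (x ⬝ᵥ Q *ᵥ y) := by
  rw [add_dotProduct, mulVec_add, dotProduct_add, dotProduct_add, hQ.dotProduct_mulVec_comm y x]
  ring

theorem PosSemidef.two_mul_mul_dotProduct_mulVec_le {Q : Matrix n n ℝ} (hQ : Q.PosSemidef)
    (x y : n → ℝ) (r : ℝ) {k : ℝ} (hk : 0 < k) :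
    2 * r * (x ⬝ᵥ Q *ᵥ y) ≤ r ^ 2 / k * (x ⬝ᵥ Q *ᵥ x) + k * (y ⬝ᵥ Q *ᵥ y) := by
  have h := hQ.dotProduct_mulVec_nonneg (r • x + (-k) • y)
  simp only [star_trivial, (isHermitian_iff_isSymm.1 hQ.isHermitian).add_dotProduct_mulVec_add,
    mulVec_smul, dotProduct_smul, smul_dotProduct, smul_eq_mul] at h
  rw [div_mul_eq_mul_div, div_add' _ _ _ hk.ne', le_div_iff₀ hk]
  linarith

open scoped MatrixOrder in
theorem IsHermitian.dotProduct_mulVec_self_le_of_eigenvalues_le [DecidableEq n]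
    {Q : Matrix n n ℝ} (hQ : Q.IsHermitian) {μ : ℝ} (hμ : ∀ i, hQ.eigenvalues i ≤ μ)
    (x : n → ℝ) : x ⬝ᵥ Q *ᵥ x ≤ μ * (x ⬝ᵥ x) := by
  have hle : Q ≤ algebraMap ℝ (Matrix n n ℝ) μ := by
    refine le_algebraMap_of_spectrum_le (fun t ht => ?_) hQ
    obtain ⟨i, rfl⟩ := hQ.spectrum_real_eq_range_eigenvalues ▸ ht
    exact hμ i
  have h := (le_iff.1 hle).dotProduct_mulVec_nonneg x
  rwa [Algebra.algebraMap_eq_smul_one, star_trivial, sub_mulVec, dotProduct_sub, smul_mulVec,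
    one_mulVec, dotProduct_smul, smul_eq_mul, sub_nonneg] at h

end Matrix

theorem mahal_nonneg {d : ℕ} {Q : Matrix (Fin d) (Fin d) ℝ} (hQ : Q.PosSemidef)
    (x y : Fin d → ℝ) : 0 ≤ mahal Q x y := by
  simpa [mahal] using hQ.dotProduct_mulVec_nonneg (x - y)

theorem mahal_comm {d : ℕ} (Q : Matrix (Fin d) (Fin d) ℝ) (x y : Fin d → ℝ) :
    mahal Q x y = mahal Q y x := by
  rw [mahal, mahal, ← neg_sub y x, neg_dotProduct, mulVec_neg, dotProduct_neg, neg_neg]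

theorem mahal_eq_add_add {d : ℕ} {Q : Matrix (Fin d) (Fin d) ℝ} (hQ : Q.IsSymm)
    (x y z : Fin d → ℝ) :
    mahal Q x y = mahal Q x z + mahal Q z y + 2 * ((x - z) ⬝ᵥ Q *ᵥ (z - y)) := by
  rw [mahal, ← sub_add_sub_cancel x z y, hQ.add_dotProduct_mulVec_add]
  rfl

theorem div_sq_mul_le_of_le_half_mul {α β s m b ν : ℝ} (hβ : 0 < β) (hαβ : α ≤ β)
    (hs : 0 ≤ s) (hm : 0 ≤ m) (hb : 0 ≤ b) (hbν : b ≤ β / 2 * ν) :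
    α * (s * β + m) / β ^ 2 * b ≤ s * b + m / 2 * ν := calc
  _ ≤ (s * β + m) / β * b := by
    gcongr ?_ * _
    rw [div_le_div_iff₀ (by positivity) hβ]
    nlinarith [mul_le_mul_of_nonneg_left hαβ (by positivity : 0 ≤ (s * β + m) * β)]
  _ = s * b + m * (b / β) := by field_simp
  _ ≤ s * b + m / 2 * ν := by
    rw [div_mul_eq_mul_div, mul_div_assoc]
    gcongr _ + m * ?_
    rw [div_le_div_iff₀ hβ two_pos]
    linarith

theorem mla_robd_comparison_bound_general {d : ℕ} (m α β lam1 lam2 lam3 : ℝ)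
    (hm : 0 < m) (hα : 0 < α) (h2 : 0 ≤ lam2) (h3 : 0 ≤ lam3)
    (Q : Matrix (Fin d) (Fin d) ℝ) (hQ : Q.PosDef)
    (heig : ∀ i, α / 2 ≤ hQ.isHermitian.eigenvalues i ∧ hQ.isHermitian.eigenvalues i ≤ β / 2)
    (xst xstprev xprev : Fin d → ℝ) :
    lam1 * mahal Q xst xprev - (lam1 + lam2 + lam3) * mahal Q xprev xstprev -
        m / 2 * ∑ i, (xstprev i - xprev i) ^ 2 ≤
      lam1 * (1 + lam1 * β ^ 2 / (α * ((lam2 + lam3) * β + m))) * mahal Q xst xstprev := by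
  rcases isEmpty_or_nonempty (Fin d) with hd | ⟨⟨i⟩⟩
  · simp [mahal]
  have hαβ : α ≤ β := by linarith [heig i]
  have hβ : 0 < β := hα.trans_le hαβ
  have hbound : mahal Q xstprev xprev ≤ β / 2 * ∑ i, (xstprev i - xprev i) ^ 2 := by
    have h := hQ.isHermitian.dotProduct_mulVec_self_le_of_eigenvalues_le (fun j => (heig j).2)
      (xstprev - xprev)
    rwa [show (xstprev - xprev) ⬝ᵥ (xstprev - xprev) = ∑ i, (xstprev i - xprev i) ^ 2 by
      simp [dotProduct, sq]] at h
  have hk := div_sq_mul_le_of_le_half_mul hβ hαβ (add_nonneg h2 h3) hm.le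
    (mahal_nonneg hQ.posSemidef xstprev xprev) hbound
  have hcross := hQ.posSemidef.two_mul_mul_dotProduct_mulVec_le (xst - xstprev)
    (xstprev - xprev) lam1 (by positivity : 0 < α * ((lam2 + lam3) * β + m) / β ^ 2)
  rw [show lam1 ^ 2 / (α * ((lam2 + lam3) * β + m) / β ^ 2) =
      lam1 * (lam1 * β ^ 2 / (α * ((lam2 + lam3) * β + m))) by field_simp] at hcross
  change _ ≤ _ * mahal Q xst xstprev + _ * mahal Q xstprev xprev at hcross
  rw [mahal_eq_add_add (isHermitian_iff_isSymm.1 hQ.isHermitian) xst xprev xstprev,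
    mahal_comm Q xprev]
  linarith

/-- For `Q` symmetric positive definite with eigenvalues in `[α/2, β/2]`,
`m > 0`, `λ₁ ∈ (0,1]`, `λ₂, λ₃ ≥ 0`, and any points `x*ₜ, x*ₜ₋₁, xₜ₋₁`:
`λ₁c(x*ₜ,xₜ₋₁) − (λ₁+λ₂+λ₃)c(xₜ₋₁,x*ₜ₋₁) − (m/2)‖x*ₜ₋₁ − xₜ₋₁‖²
  ≤ λ₁(1 + λ₁β²/(α((λ₂+λ₃)β + m)))·c(x*ₜ,x*ₜ₋₁)`. -/
theorem mla_robd_comparison_bound {d : ℕ} (m α β lam1 lam2 lam3 : ℝ)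
    (hm : 0 < m) (hα : 0 < α) (h1 : 0 < lam1) (h1' : lam1 ≤ 1) (h2 : 0 ≤ lam2) (h3 : 0 ≤ lam3)
    (Q : Matrix (Fin d) (Fin d) ℝ) (hQ : Q.PosDef)
    (heig : ∀ i, α / 2 ≤ hQ.isHermitian.eigenvalues i ∧ hQ.isHermitian.eigenvalues i ≤ β / 2)
    (xst xstprev xprev : Fin d → ℝ) :
    lam1 * mahal Q xst xprev - (lam1 + lam2 + lam3) * mahal Q xprev xstprev -
        m / 2 * ∑ i, (xstprev i - xprev i) ^ 2 ≤
      lam1 * (1 + lam1 * β ^ 2 / (α * ((lam2 + lam3) * β + m))) * mahal Q xst xstprev :=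
  mla_robd_comparison_bound_general m α β lam1 lam2 lam3 hm hα h2 h3 Q hQ heig xst xstprev xprev
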